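/- Let J = (∂f_i/∂x_l) be the 2n×2n Jacobian matrix of smooth functions f₁,...,f_{2n} of variables x₁,...,x_{2n}, and define {f_i, f_l} = Σ_{j=1}^n (∂f_i/∂x_{2j−1} ∂f_l/∂x_{2j} − ∂f_i/∂x_{2j} ∂f_l/∂x_{2j−1}). Then det J = (1/(2ⁿ n!)) Σ_{σ∈S_{2n}} sign(σ) ∏_{j=1}^n {f_{σ(2j−1)}, f_{σ(2j)}}. Equivalently, as a statement about an arbitrary 2n×2n matrix J over a commutative ring: defining {i,l} = Σ_{j=1}^n (J_{i,2j−1} J_{l,2j} − J_{i,2j} J_{l,2j−1}), one has det J = (1/(2ⁿ n!)) Σ_{σ∈S_{2n}} sign(σ) ∏_{j=1}^n {σ(2j−1), σ(2j)}. -/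

import Mathlib

/-!
Index the columns by `ι × Bool`, so that `(k, false), (k, true)` is the `k`-th Darboux pair, and
write the pairing of rows `u, v` as `∑ p, ±u p * v p'`, where `p'` is the partner of `p`.
Expanding `∏ⱼ {σ(j, false), σ(j, true)}` then gives a sum over maps `f : ι → ι × Bool`, and after
summing over `σ` first, `f` contributes `±det` of `J` with its columns relabelled by
`(j, false) ↦ f j`, `(j, true) ↦ (f j)'`. This determinant vanishes unless `f` meets every pair
exactly once; then the relabelling is a permutation whose sign is exactly the `±` in front, so
each of the `n! 2ⁿ` such `f` contributes `det J`.
-/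

open Finset Equiv Function

section SymplecticPairing

variable {ι R : Type*} [CommRing R]

def xorPerm (ε : Bool) : Perm Bool := if ε then boolNot else 1

@[simp]
lemma xorPerm_apply (ε b : Bool) : xorPerm ε b = xor ε b := by
  cases ε <;> cases b <;> rfl

@[simp]
lemma sign_xorPerm (ε : Bool) : Perm.sign (xorPerm ε) = if ε then -1 else 1 := by
  have : boolNot = swap false true := by ext b; cases b <;> rfl
  cases ε <;> simp [xorPerm, this]

def pairColumns (f : ι → ι × Bool) (m : ι × Bool) : ι × Bool :=
  ((f m.1).1, xor (f m.1).2 m.2)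

def pairPerm (π : Perm ι) (ε : ι → Bool) : Perm (ι × Bool) :=
  prodCongrLeft (fun _ => π) * prodCongrRight (fun j => xorPerm (ε j))

lemma coe_pairPerm (π : Perm ι) (ε : ι → Bool) :
    ⇑(pairPerm π ε) = pairColumns (fun j => (π j, ε j)) := by
  ext ⟨j, b⟩ <;> simp [pairPerm, pairColumns]

variable [Fintype ι]

def sympPairing (u v : ι × Bool → R) : R :=
  ∑ k, (u (k, false) * v (k, true) - u (k, true) * v (k, false))

lemma sympPairing_eq_sum (u v : ι × Bool → R) :
    sympPairing u v = ∑ p : ι × Bool, (Perm.sign (xorPerm p.2) : R) * u p * v (p.1, !p.2) := by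
  rw [sympPairing, Fintype.sum_prod_type]
  refine sum_congr rfl fun k _ => ?_
  simp only [Fintype.sum_bool, sign_xorPerm, if_true, Bool.false_eq_true, if_false,
    Bool.not_true, Bool.not_false, Units.val_neg, Units.val_one, Int.cast_neg, Int.cast_one]
  ring

variable [DecidableEq ι]

lemma sign_pairPerm (π : Perm ι) (ε : ι → Bool) :
    Perm.sign (pairPerm π ε) = ∏ j, Perm.sign (xorPerm (ε j)) := by
  rw [pairPerm, map_mul, Perm.sign_prodCongrLeft, Perm.sign_prodCongrRight, Fintype.prod_bool,
    Int.units_mul_self, one_mul]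

lemma prod_sympPairing_eq_sum (A : Matrix (ι × Bool) (ι × Bool) R) :
    ∏ j, sympPairing (A (j, false)) (A (j, true)) =
      ∑ f : ι → ι × Bool,
        (∏ j, (Perm.sign (xorPerm (f j).2) : R)) * ∏ m, A m (pairColumns f m) := by
  simp_rw [sympPairing_eq_sum, Fintype.prod_sum]
  refine sum_congr rfl fun f _ => ?_
  rw [Fintype.prod_prod_type, ← prod_mul_distrib]
  refine prod_congr rfl fun j _ => ?_
  simp only [Fintype.prod_bool, pairColumns, Bool.xor_true, Bool.xor_false]
  ring

lemma det_submatrix_pairColumns_of_not_injective (A : Matrix (ι × Bool) (ι × Bool) R)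
    {f : ι → ι × Bool} (hf : ¬ Injective (Prod.fst ∘ f)) :
    (A.submatrix id (pairColumns f)).det = 0 := by
  obtain ⟨a, b, hab, hne⟩ := not_injective_iff.mp hf
  refine Matrix.det_zero_of_column_eq (i := (a, (f a).2)) (j := (b, (f b).2))
    (by simp [hne]) fun r => ?_
  simp_all [pairColumns]

theorem sum_sign_mul_prod_sympPairing (A : Matrix (ι × Bool) (ι × Bool) R) :
    ∑ σ : Perm (ι × Bool),
        (Perm.sign σ : R) * ∏ j, sympPairing (A (σ (j, false))) (A (σ (j, true))) =
      (2 ^ Fintype.card ι * (Fintype.card ι).factorial : R) * A.det := by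
  calc _ = ∑ f : ι → ι × Bool,
          (∏ j, (Perm.sign (xorPerm (f j).2) : R)) * (A.submatrix id (pairColumns f)).det := by
        have expand (σ : Perm (ι × Bool)) :
            ∏ j, sympPairing (A (σ (j, false))) (A (σ (j, true))) = ∑ f : ι → ι × Bool,
              (∏ j, (Perm.sign (xorPerm (f j).2) : R)) * ∏ m, A (σ m) (pairColumns f m) :=
          prod_sympPairing_eq_sum (A.submatrix σ id)
        simp_rw [expand, Matrix.det_apply', mul_sum]
        rw [sum_comm]
        simp only [Matrix.submatrix_apply, id, mul_left_comm]
    _ = ∑ q : Perm ι × (ι → Bool), A.det := by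
        refine (Fintype.sum_of_injective (fun q j => (q.1 j, q.2 j)) ?_ _ _ ?_ ?_).symm
        · rintro ⟨π, ε⟩ ⟨π', ε'⟩ h
          exact Prod.ext (Perm.ext fun j => congr_arg Prod.fst (congr_fun h j))
            (funext fun j => congr_arg Prod.snd (congr_fun h j))
        · intro f hf
          rw [det_submatrix_pairColumns_of_not_injective A fun h =>
            hf ⟨(ofBijective _ h.bijective_of_finite, Prod.snd ∘ f), rfl⟩, mul_zero]
        · rintro ⟨π, ε⟩
          rw [← coe_pairPerm, Matrix.det_permute', sign_pairPerm, ← mul_assoc]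
          push_cast
          simp only [← prod_mul_distrib, ← Int.cast_mul, ← Units.val_mul, Int.units_mul_self,
            Units.val_one, Int.cast_one, prod_const_one, one_mul]
    _ = _ := by simp [Fintype.card_perm, mul_comm]

end SymplecticPairing

def finPairEquiv (n : ℕ) : Fin n × Bool ≃ Fin (2 * n) :=
  (prodCongr (.refl _) finTwoEquiv.symm).trans (finProdFinEquiv.trans (finCongr (mul_comm n 2)))

@[simp]
lemma finPairEquiv_apply_val {n : ℕ} (p : Fin n × Bool) :
    (finPairEquiv n p : ℕ) = 2 * p.1 + p.2.toNat := by
  rcases p with ⟨j, _ | _⟩ <;> simp [finPairEquiv, finTwoEquiv, add_comm]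

/-- Lemma `lembrackets`, matrix form: for a `2n × 2n` matrix `J` over a
field of characteristic zero, with the Poisson pairing of rows
`{i,l} = Σ_{j=1}^n (J_{i,2j−1} J_{l,2j} − J_{i,2j} J_{l,2j−1})`, one has
`det J = (1/(2ⁿ n!)) Σ_{σ∈S_{2n}} sign(σ) ∏_{j=1}^n {σ(2j−1), σ(2j)}`. -/
theorem stmt3 {F : Type*} [Field F] [CharZero F] (n : ℕ)
    (J : Matrix (Fin (2 * n)) (Fin (2 * n)) F)
    (pb : Fin (2 * n) → Fin (2 * n) → F)
    (hpb : ∀ i l, pb i l = ∑ j : Fin n,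
      (J i ⟨2 * j.1, by have := j.2; omega⟩ * J l ⟨2 * j.1 + 1, by have := j.2; omega⟩ -
       J i ⟨2 * j.1 + 1, by have := j.2; omega⟩ * J l ⟨2 * j.1, by have := j.2; omega⟩)) :
    J.det =
      (1 / (2 ^ n * (Nat.factorial n) : F)) *
        ∑ σ : Equiv.Perm (Fin (2 * n)),
          (Equiv.Perm.sign σ : ℤ) •
            ∏ j : Fin n,
              pb (σ ⟨2 * j.1, by have := j.2; omega⟩) (σ ⟨2 * j.1 + 1, by have := j.2; omega⟩) := by
  set e := finPairEquiv n
  set A := J.submatrix e e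
  have he (j : Fin n) : (⟨2 * j.1, by omega⟩ : Fin (2 * n)) = e (j, false) ∧
      (⟨2 * j.1 + 1, by omega⟩ : Fin (2 * n)) = e (j, true) := by
    simp [Fin.ext_iff, e]
  have hpair (p q : Fin n × Bool) : pb (e p) (e q) = sympPairing (A p) (A q) := by
    simp [hpb, sympPairing, A, he]
  have hsum : ∑ σ : Perm (Fin (2 * n)), (Perm.sign σ : ℤ) •
        ∏ j : Fin n, pb (σ ⟨2 * j.1, by omega⟩) (σ ⟨2 * j.1 + 1, by omega⟩) =
      ∑ τ : Perm (Fin n × Bool),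
        (Perm.sign τ : F) * ∏ j, sympPairing (A (τ (j, false))) (A (τ (j, true))) := by
    rw [← e.permCongr.sum_comp]
    refine sum_congr rfl fun τ _ => ?_
    simp [Perm.sign_permCongr, zsmul_eq_mul, he, hpair]
  rw [hsum, sum_sign_mul_prod_sympPairing, Matrix.det_submatrix_equiv_self, Fintype.card_fin,
    ← mul_assoc, one_div_mul_cancel (by simp [n.factorial_ne_zero]), one_mul]
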